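/- The candidate branch datum (S², S², 2k, 3; ⟦2,…,2⟧, ⟦2,…,2⟧, ⟦s, 2k−s⟧) with 0 < s < 2k and s ≠ k is not realizable: there exist no permutations θ₁, θ₂, θ₃ in S_{2k} with θ₁ and θ₂ fixed-point-free involutions, θ₃ having exactly two cycles of lengths s and 2k−s, θ₁θ₂θ₃ = id, and ⟨θ₁, θ₂, θ₃⟩ acting transitively on {1,…,2k}. -/

import Mathlib

/-- The orbit (cycle) of a point under the cyclic group generated by a permutation. -/
def permOrbit {α : Type*} (f : Equiv.Perm α) (x : α) : Set α :=
  {y | ∃ n : ℤ, (f ^ n) x = y}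

/-!
Since `θ₁` and `θ₂` are involutions with `θ₁ θ₂ θ₃ = 1`, each of them conjugates `θ₃` to `θ₃⁻¹`,
so it maps every cycle of `θ₃` onto a cycle of `θ₃` of the same length. The two cycles of `θ₃`
have different lengths `s ≠ 2k - s`, so `θ₁`, `θ₂` and hence `θ₃ = (θ₁ θ₂)⁻¹` all stabilize the
cycle of length `s`, and the group they generate cannot be transitive.
-/

open Pointwise

section Reversal

variable {G : Type*} [Group G] {a b c : G}

theorem eq_mul_of_mul_self_eq_one_of_mul_mul_eq_one (ha : a * a = 1) (hb : b * b = 1)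
    (h : a * b * c = 1) : c = b * a := by
  rw [eq_inv_of_mul_eq_one_right h, mul_inv_rev, mul_eq_one_iff_inv_eq.1 ha,
    mul_eq_one_iff_inv_eq.1 hb]

theorem conj_eq_inv_of_mul_self_eq_one_of_mul_mul_eq_one_left (ha : a * a = 1) (hb : b * b = 1)
    (h : a * b * c = 1) : a * c * a⁻¹ = c⁻¹ := by
  rw [eq_mul_of_mul_self_eq_one_of_mul_mul_eq_one ha hb h, mul_inv_rev,
    mul_eq_one_iff_inv_eq.1 ha, mul_eq_one_iff_inv_eq.1 hb]
  simp only [mul_assoc, ha, mul_one]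

theorem conj_eq_inv_of_mul_self_eq_one_of_mul_mul_eq_one_right (ha : a * a = 1) (hb : b * b = 1)
    (h : a * b * c = 1) : b * c * b⁻¹ = c⁻¹ := by
  rw [eq_mul_of_mul_self_eq_one_of_mul_mul_eq_one ha hb h, mul_inv_rev,
    mul_eq_one_iff_inv_eq.1 ha, mul_eq_one_iff_inv_eq.1 hb, ← mul_assoc, hb, one_mul]

end Reversal

namespace Equiv.Perm

variable {α : Type*} {f g : Perm α} {x y : α}

theorem mem_permOrbit_iff_sameCycle : y ∈ permOrbit f x ↔ f.SameCycle x y := Iff.rfl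

theorem permOrbit_eq_of_mem (h : y ∈ permOrbit f x) : permOrbit f y = permOrbit f x := by
  ext z
  exact ⟨SameCycle.trans h, SameCycle.trans (SameCycle.symm h)⟩

theorem image_permOrbit_of_conj_eq_inv (h : g * f * g⁻¹ = f⁻¹) (x : α) :
    g '' permOrbit f x = permOrbit f (g x) := by
  ext z
  rw [Set.mem_image_equiv, mem_permOrbit_iff_sameCycle, mem_permOrbit_iff_sameCycle,
    ← sameCycle_inv (x := g x), ← h, sameCycle_conj, inv_eq_iff_eq.2 rfl]
  rfl

theorem mem_stabilizer_permOrbit_of_conj_eq_inv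
    (hcover : ∀ z, z ∈ permOrbit f x ∨ z ∈ permOrbit f y)
    (hcard : (permOrbit f x).ncard ≠ (permOrbit f y).ncard) (h : g * f * g⁻¹ = f⁻¹) :
    g ∈ MulAction.stabilizer (Perm α) (permOrbit f x) := by
  have hsmul : g • permOrbit f x = permOrbit f (g x) := by
    rw [← image_permOrbit_of_conj_eq_inv h, ← Set.image_smul]; rfl
  rw [MulAction.mem_stabilizer_iff, hsmul]
  rcases hcover (g x) with hA | hB
  · exact permOrbit_eq_of_mem hA
  · refine absurd ?_ hcard
    rw [← permOrbit_eq_of_mem hB, ← image_permOrbit_of_conj_eq_inv h,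
      Set.ncard_image_of_injective _ g.injective]

end Equiv.Perm

theorem stmt4_general (k s : ℕ) (hsk : s ≠ k) :
    ¬ ∃ θ₁ θ₂ θ₃ : Equiv.Perm (Fin (2 * k)),
      (θ₁ * θ₁ = 1 ∧ ∀ x, θ₁ x ≠ x) ∧
      (θ₂ * θ₂ = 1 ∧ ∀ x, θ₂ x ≠ x) ∧
      (∃ x y : Fin (2 * k), permOrbit θ₃ x ≠ permOrbit θ₃ y ∧
        (permOrbit θ₃ x).ncard = s ∧ (permOrbit θ₃ y).ncard = 2 * k - s ∧
        ∀ z, z ∈ permOrbit θ₃ x ∨ z ∈ permOrbit θ₃ y) ∧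
      θ₁ * θ₂ * θ₃ = 1 ∧
      (∀ x y : Fin (2 * k), ∃ g ∈ Subgroup.closure ({θ₁, θ₂, θ₃} : Set (Equiv.Perm (Fin (2 * k)))),
        g x = y) := by
  rintro ⟨θ₁, θ₂, θ₃, ⟨h₁, -⟩, ⟨h₂, -⟩, ⟨x, y, hxy, hx, hy, hcover⟩, hprod, htrans⟩
  have hcard : (permOrbit θ₃ x).ncard ≠ (permOrbit θ₃ y).ncard := by omega
  set H := MulAction.stabilizer (Equiv.Perm (Fin (2 * k))) (permOrbit θ₃ x)
  have hθ₁ : θ₁ ∈ H := Equiv.Perm.mem_stabilizer_permOrbit_of_conj_eq_inv hcover hcard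
    (conj_eq_inv_of_mul_self_eq_one_of_mul_mul_eq_one_left h₁ h₂ hprod)
  have hθ₂ : θ₂ ∈ H := Equiv.Perm.mem_stabilizer_permOrbit_of_conj_eq_inv hcover hcard
    (conj_eq_inv_of_mul_self_eq_one_of_mul_mul_eq_one_right h₁ h₂ hprod)
  have hθ₃ : θ₃ ∈ H := eq_inv_of_mul_eq_one_right hprod ▸ H.inv_mem (H.mul_mem hθ₁ hθ₂)
  have hclosure : Subgroup.closure {θ₁, θ₂, θ₃} ≤ H := by
    simp [Subgroup.closure_le, Set.insert_subset_iff, hθ₁, hθ₂, hθ₃]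
  obtain ⟨g, hg, rfl⟩ := htrans x y
  have hgx : g x ∈ permOrbit θ₃ x := by
    rw [← MulAction.mem_stabilizer_iff.1 (hclosure hg)]
    exact Set.smul_mem_smul_set (a := g) (⟨0, rfl⟩ : x ∈ permOrbit θ₃ x)
  exact hxy (Equiv.Perm.permOrbit_eq_of_mem hgx).symm

/-- The candidate branch datum `(S², S², 2k, 3; ⟦2,…,2⟧, ⟦2,…,2⟧, ⟦s, 2k-s⟧)` with
`0 < s < 2k`, `s ≠ k` is not realizable: no monodromy representation exists. -/
theorem stmt4 (k s : ℕ) (hk : 1 ≤ k) (hs0 : 0 < s) (hs1 : s < 2 * k) (hsk : s ≠ k) :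
    ¬ ∃ θ₁ θ₂ θ₃ : Equiv.Perm (Fin (2 * k)),
      (θ₁ * θ₁ = 1 ∧ ∀ x, θ₁ x ≠ x) ∧
      (θ₂ * θ₂ = 1 ∧ ∀ x, θ₂ x ≠ x) ∧
      (∃ x y : Fin (2 * k), permOrbit θ₃ x ≠ permOrbit θ₃ y ∧
        (permOrbit θ₃ x).ncard = s ∧ (permOrbit θ₃ y).ncard = 2 * k - s ∧
        ∀ z, z ∈ permOrbit θ₃ x ∨ z ∈ permOrbit θ₃ y) ∧
      θ₁ * θ₂ * θ₃ = 1 ∧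
      (∀ x y : Fin (2 * k), ∃ g ∈ Subgroup.closure ({θ₁, θ₂, θ₃} : Set (Equiv.Perm (Fin (2 * k)))),
        g x = y) :=
  stmt4_general k s hsk
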